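/- arXiv:2105.01449 — 6 statements merged into one kernel-verified Lean document; each statement's English description precedes it below -/
import Mathlib

section
/- (Hurwitz's theorem) For every irrational real number α there exist infinitely many rational numbers p/q (with p ∈ ℤ, q ∈ ℕ, q ≥ 1) such that |α − p/q| < 1/(√5 · q²). -/
private lemma sqrt5_irr : Irrational (Real.sqrt 5) := by
  rw [show ((5:ℝ)) = ((5:ℕ):ℝ) by norm_num]
  exact (by norm_num : Nat.Prime 5).irrational_sqrt

private lemma sqrt5_sq : Real.sqrt 5 ^ 2 = 5 := Real.sq_sqrt (by norm_num)

private lemma sqrt5_gt_two : (2:ℝ) < Real.sqrt 5 := by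
  nlinarith [Real.sqrt_nonneg 5, sqrt5_sq]

private lemma sqrt5_lt_three : Real.sqrt 5 < 3 := by
  nlinarith [Real.sqrt_nonneg 5, sqrt5_sq]

/-- The key impossibility: both quadratic inequalities force `√5` to be rational. -/
private lemma key (b d : ℝ) (hb : 0 < b) (hd : 0 < d)
    (h1 : b^2 + d^2 ≤ Real.sqrt 5 * (b*d))
    (h2 : b^2 + (b+d)^2 ≤ Real.sqrt 5 * (b*(b+d))) :
    Real.sqrt 5 * b = b + 2*d := by
  set s := Real.sqrt 5 with hs
  have hs2 : s ^ 2 = 5 := sqrt5_sq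
  have hsl : (2:ℝ) < s := sqrt5_gt_two
  have hsu : s < 3 := sqrt5_lt_three
  have c1 : s * b ≤ b + 2*d := by
    by_contra hcon
    push_neg at hcon
    have f1 : 0 < (s-1)*b - 2*d := by nlinarith
    have f2 : 0 < (s+1)*b - 2*d := by nlinarith
    nlinarith [mul_pos f1 f2]
  have c2 : b + 2*d ≤ s * b := by
    by_contra hcon
    push_neg at hcon
    have f1 : 0 < 2*(b+d) - (s-1)*b := by nlinarith
    have f2 : 0 < 2*(b+d) - (s+1)*b := by nlinarith
    nlinarith [mul_pos f1 f2]
  linarith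

/-- Farey descent: consecutive Farey pairs around an irrational, with large denominator sum. -/
private lemma farey (α : ℝ) (hα : Irrational α) (n : ℕ) :
    ∃ a b c d : ℤ, 0 < b ∧ 0 < d ∧ b*c - a*d = 1 ∧
      (a:ℝ)/b < α ∧ α < (c:ℝ)/d ∧ (n:ℤ) ≤ b + d := by
  induction n with
  | zero =>
    refine ⟨⌊α⌋, 1, ⌊α⌋+1, 1, one_pos, one_pos, by ring, ?_, ?_, by norm_num⟩
    · rw [Int.cast_one, div_one]
      exact lt_of_le_of_ne (Int.floor_le α) (Ne.symm (hα.ne_int ⌊α⌋))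
    · rw [Int.cast_one, div_one]
      push_cast
      exact Int.lt_floor_add_one α
  | succ n ih =>
    obtain ⟨a, b, c, d, hb, hd, hdet, hl, hr, hn⟩ := ih
    have hm : α ≠ ((a+c:ℤ):ℝ)/((b+d:ℤ):ℝ) := by
      intro h
      exact hα ⟨((a+c:ℤ):ℚ)/((b+d:ℤ):ℚ), by push_cast; push_cast at h; rw [h]⟩
    rcases hm.lt_or_gt with h | h
    · refine ⟨a, b, a+c, b+d, hb, by linarith, by ring_nf; ring_nf at hdet; linarith,
        hl, by push_cast at h ⊢; exact h, by push_cast; omega⟩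
    · refine ⟨a+c, b+d, c, d, by linarith, hd, by ring_nf; ring_nf at hdet; linarith,
        by push_cast at h ⊢; exact h, hr, by push_cast; omega⟩

private lemma sqrt5_ne_ratio (x y : ℤ) (hx : 0 < x) : Real.sqrt 5 * (x:ℝ) ≠ (y:ℝ) := by
  intro h
  apply sqrt5_irr
  refine ⟨(y:ℚ)/(x:ℚ), ?_⟩
  have hx' : ((x:ℚ):ℝ) ≠ 0 := by push_cast; positivity
  push_cast
  rw [div_eq_iff (by push_cast at hx' ⊢; exact hx')]
  linarith [h]

private lemma step (s x y : ℝ) (hs : 0 < s) (hx : 0 < x) (hy : 0 < y)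
    (h : 1/(s*x^2) + 1/(s*y^2) ≤ 1/(x*y)) : x^2 + y^2 ≤ s*(x*y) := by
  rw [div_add_div _ _ (by positivity) (by positivity),
    div_le_div_iff₀ (by positivity) (by positivity)] at h
  nlinarith [mul_pos (mul_pos hs hx) hy, mul_pos hx hy]

set_option maxHeartbeats 1000000 in
private lemma good (α : ℝ) (hα : Irrational α) (a b c d : ℤ) (hb : 0 < b) (hd : 0 < d)
    (hdet : b*c - a*d = 1) (hl : (a:ℝ)/b < α) (hr : α < (c:ℝ)/d) :
    ∃ r : ℚ, |α - (r:ℝ)| < 1 / (Real.sqrt 5 * (r.den : ℝ)^2) ∧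
      |α - (r:ℝ)| ≤ 1/((b:ℝ)*d) := by
  set s := Real.sqrt 5 with hsdef
  have hsp : (0:ℝ) < s := by have := sqrt5_gt_two; linarith
  have hbR : (0:ℝ) < (b:ℝ) := by exact_mod_cast hb
  have hdR : (0:ℝ) < (d:ℝ) := by exact_mod_cast hd
  have hwZ : (0:ℤ) < b + d := by linarith
  have hwR : (0:ℝ) < (b:ℝ) + d := by linarith
  have hdetR : (b:ℝ)*c - a*d = 1 := by exact_mod_cast hdet
  -- the three candidates
  set ra : ℚ := (a:ℚ)/(b:ℚ) with hra
  set rc : ℚ := (c:ℚ)/(d:ℚ) with hrc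
  set rm : ℚ := ((a+c:ℤ):ℚ)/((b+d:ℤ):ℚ) with hrm
  have hraR : (ra:ℝ) = (a:ℝ)/b := by rw [hra]; push_cast; ring
  have hrcR : (rc:ℝ) = (c:ℝ)/d := by rw [hrc]; push_cast; ring
  have hrmR : (rm:ℝ) = ((a:ℝ)+c)/((b:ℝ)+d) := by rw [hrm]; push_cast; ring
  -- denominators
  have cop_ab : Nat.Coprime a.natAbs b.natAbs := by
    have h : IsCoprime a b := ⟨-d, c, by linear_combination hdet⟩
    exact Int.isCoprime_iff_gcd_eq_one.mp h
  have cop_cd : Nat.Coprime c.natAbs d.natAbs := by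
    have h : IsCoprime c d := ⟨b, -a, by linear_combination hdet⟩
    exact Int.isCoprime_iff_gcd_eq_one.mp h
  have cop_m : Nat.Coprime (a+c).natAbs (b+d).natAbs := by
    have h : IsCoprime (a+c) (b+d) := ⟨-d, c, by linear_combination hdet⟩
    exact Int.isCoprime_iff_gcd_eq_one.mp h
  have hden_a : ((ra.den : ℕ) : ℝ) = (b:ℝ) := by
    have h2 : ((ra.den : ℕ) : ℤ) = b := by rw [hra]; exact Rat.den_div_eq_of_coprime hb cop_ab
    exact_mod_cast h2
  have hden_c : ((rc.den : ℕ) : ℝ) = (d:ℝ) := by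
    have h2 : ((rc.den : ℕ) : ℤ) = d := by rw [hrc]; exact Rat.den_div_eq_of_coprime hd cop_cd
    exact_mod_cast h2
  have hden_m : ((rm.den : ℕ) : ℝ) = (b:ℝ) + d := by
    have h2 : ((rm.den : ℕ) : ℤ) = b + d := by rw [hrm]; exact Rat.den_div_eq_of_coprime hwZ cop_m
    exact_mod_cast h2
  -- gaps
  have gap : (c:ℝ)/d - (a:ℝ)/b = 1/((b:ℝ)*d) := by
    rw [div_sub_div _ _ hdR.ne' hbR.ne',
      show (c:ℝ)*b - (d:ℝ)*a = 1 by linear_combination hdetR, mul_comm]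
  have gapm1 : ((a:ℝ)+c)/((b:ℝ)+d) - (a:ℝ)/b = 1/((b:ℝ)*((b:ℝ)+d)) := by
    rw [div_sub_div _ _ hwR.ne' hbR.ne',
      show ((a:ℝ)+c)*b - ((b:ℝ)+d)*a = 1 by linear_combination hdetR, mul_comm]
  have gapm2 : (c:ℝ)/d - ((a:ℝ)+c)/((b:ℝ)+d) = 1/((d:ℝ)*((b:ℝ)+d)) := by
    rw [div_sub_div _ _ hdR.ne' hwR.ne',
      show (c:ℝ)*((b:ℝ)+d) - (d:ℝ)*((a:ℝ)+c) = 1 by linear_combination hdetR, mul_comm]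
  have hmne : α ≠ ((a:ℝ)+c)/((b:ℝ)+d) := by
    rw [← hrmR]; exact hα.ne_rat rm
  -- the trichotomy: one of the three is a good approximation
  have tri : |α - (ra:ℝ)| < 1/(s * ((b:ℝ))^2) ∨ |α - (rc:ℝ)| < 1/(s * ((d:ℝ))^2) ∨
      |α - (rm:ℝ)| < 1/(s * ((b:ℝ)+d)^2) := by
    by_contra hcon
    push_neg at hcon
    obtain ⟨n1, n2, n3⟩ := hcon
    rw [hraR, abs_of_pos (by linarith [hl] : (0:ℝ) < α - (a:ℝ)/b)] at n1
    rw [hrcR, abs_of_neg (by linarith [hr] : α - (c:ℝ)/d < 0)] at n2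
    have hbd : ((b:ℝ))^2 + ((d:ℝ))^2 ≤ s*((b:ℝ)*(d:ℝ)) := by
      apply step s _ _ hsp hbR hdR
      have : α - (a:ℝ)/b + ((c:ℝ)/d - α) = 1/((b:ℝ)*d) := by linarith [gap]
      linarith [n1, n2]
    rcases hmne.lt_or_gt with h | h
    · rw [hrmR, abs_of_neg (by linarith : α - ((a:ℝ)+c)/((b:ℝ)+d) < 0)] at n3
      have hbw : ((b:ℝ))^2 + ((b:ℝ)+(d:ℝ))^2 ≤ s*((b:ℝ)*((b:ℝ)+(d:ℝ))) := by
        apply step s _ _ hsp hbR hwR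
        linarith [n1, n3, gapm1]
      exact sqrt5_ne_ratio b (b + 2*d) hb
        (by push_cast; linarith [key (b:ℝ) (d:ℝ) hbR hdR hbd hbw])
    · rw [hrmR, abs_of_pos (by linarith : (0:ℝ) < α - ((a:ℝ)+c)/((b:ℝ)+d))] at n3
      have hdw : ((d:ℝ))^2 + ((d:ℝ)+(b:ℝ))^2 ≤ s*((d:ℝ)*((d:ℝ)+(b:ℝ))) := by
        apply step s _ _ hsp hdR (by linarith)
        have e1 : ((d:ℝ))+(b:ℝ) = (b:ℝ)+d := by ring
        rw [e1]
        linarith [n2, n3, gapm2]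
      have hdb : ((d:ℝ))^2 + ((b:ℝ))^2 ≤ s*((d:ℝ)*(b:ℝ)) := by nlinarith [hbd]
      exact sqrt5_ne_ratio d (d + 2*b) hd
        (by push_cast; linarith [key (d:ℝ) (b:ℝ) hdR hbR hdb hdw])
  -- distance bounds for all three candidates
  have hm_lo : (a:ℝ)/b < ((a:ℝ)+c)/((b:ℝ)+d) := by
    have : (0:ℝ) < 1/((b:ℝ)*((b:ℝ)+d)) := by positivity
    linarith [gapm1]
  have hm_hi : ((a:ℝ)+c)/((b:ℝ)+d) < (c:ℝ)/d := by
    have : (0:ℝ) < 1/((d:ℝ)*((b:ℝ)+d)) := by positivity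
    linarith [gapm2]
  rcases tri with h | h | h
  · refine ⟨ra, ?_, ?_⟩
    · rwa [show ((ra.den : ℝ))^2 = ((b:ℝ))^2 by rw [show ((ra.den:ℕ):ℝ) = (b:ℝ) from hden_a]]
    · rw [hraR, abs_of_pos (by linarith : (0:ℝ) < α - (a:ℝ)/b)]
      linarith [gap]
  · refine ⟨rc, ?_, ?_⟩
    · rwa [show ((rc.den : ℝ))^2 = ((d:ℝ))^2 by rw [show ((rc.den:ℕ):ℝ) = (d:ℝ) from hden_c]]
    · rw [hrcR, abs_of_neg (by linarith : α - (c:ℝ)/d < 0)]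
      linarith [gap]
  · refine ⟨rm, ?_, ?_⟩
    · rwa [show ((rm.den : ℝ))^2 = ((b:ℝ)+d)^2 by rw [show ((rm.den:ℕ):ℝ) = (b:ℝ)+d from hden_m]]
    · rw [hrmR, abs_le]
      constructor <;> linarith [gap]


/-- **Hurwitz's theorem**: for every irrational real number `α` there exist infinitely many
rational numbers `p/q` with `|α - p/q| < 1/(√5 q²)`. -/
theorem hurwitz (α : ℝ) (hα : Irrational α) :
    {r : ℚ | |α - (r : ℝ)| < 1 / (Real.sqrt 5 * (r.den : ℝ) ^ 2)}.Infinite := by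
  set S := {r : ℚ | |α - (r : ℝ)| < 1 / (Real.sqrt 5 * (r.den : ℝ) ^ 2)} with hS
  have main : ∀ n : ℕ, 0 < n → ∃ r ∈ S, |α - (r:ℝ)| ≤ 2/(n:ℝ) := by
    intro n hn
    obtain ⟨a, b, c, d, hb, hd, hdet, hl, hr, hsum⟩ := farey α hα n
    obtain ⟨r, hr1, hr2⟩ := good α hα a b c d hb hd hdet hl hr
    refine ⟨r, by simpa [hS] using hr1, ?_⟩
    have hbR : (1:ℝ) ≤ (b:ℝ) := by exact_mod_cast hb
    have hdR : (1:ℝ) ≤ (d:ℝ) := by exact_mod_cast hd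
    have hnR : (0:ℝ) < (n:ℝ) := by exact_mod_cast hn
    have hsumR : (n:ℝ) ≤ (b:ℝ) + d := by exact_mod_cast hsum
    have h1 : 1/((b:ℝ)*d) ≤ 2/((b:ℝ)+d) := by
      rw [div_le_div_iff₀ (by positivity) (by positivity)]
      nlinarith
    have h2 : 2/((b:ℝ)+d) ≤ 2/(n:ℝ) := by
      apply div_le_div_of_nonneg_left (by norm_num) hnR hsumR
    linarith
  rw [hS]
  by_contra hfin
  rw [Set.not_infinite] at hfin
  obtain ⟨r1, hr1, _⟩ := main 1 one_pos
  obtain ⟨r0, hr0, hmin⟩ := Set.exists_min_image _ (fun r : ℚ => |α - (r:ℝ)|) hfin ⟨r1, hr1⟩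
  have hδ : 0 < |α - (r0:ℝ)| := by
    rw [abs_pos, sub_ne_zero]
    exact hα.ne_rat r0
  obtain ⟨n, hn⟩ := exists_nat_gt (2/|α - (r0:ℝ)|)
  have hn0 : 0 < n := by
    have h : (0:ℝ) < (n:ℝ) := lt_trans (by positivity) hn
    exact_mod_cast h
  obtain ⟨r, hrS, hrd⟩ := main n hn0
  have : 2/(n:ℝ) < |α - (r0:ℝ)| := by
    rw [div_lt_iff₀ hδ] at hn
    rw [div_lt_iff₀ (by exact_mod_cast hn0)]
    linarith [hn]
  have := hmin r hrS
  linarith [hrd]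
end

section
/- Let φ = (1+√5)/2 be the golden ratio. For all integers p and q with q ≥ 1, if |qφ − p| ≤ 1, then 1/(q·|qφ − p|) ≤ √5 + 1/q. -/
/-!
Write `e = qφ - p` and let `ψ = (1 - √5)/2` be the conjugate of `φ`. The norm
`(qφ - p)(qψ - p) = p² - pq - q²` is an integer, nonzero because `φ` and `ψ` are irrational, so
`1 ≤ |e|·|qψ - p|`. Since `qψ - p = e - q√5`, this gives `1 ≤ |e|(|e| + q√5) ≤ |e|(1 + q√5)`,
which is the claim after dividing by `q|e|`.
-/

open Real

open scoped goldenRatio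

namespace Real

theorem mul_sub_goldenRatio_mul_mul_sub_goldenConj (p q : ℝ) :
    (q * φ - p) * (q * ψ - p) = p ^ 2 - p * q - q ^ 2 := by
  linear_combination q ^ 2 * goldenRatio_mul_goldenConj - p * q * goldenRatio_add_goldenConj

theorem mul_sub_goldenConj_eq (p q : ℝ) : q * ψ - p = (q * φ - p) - q * √5 := by
  rw [← goldenRatio_sub_goldenConj]; ring

theorem intCast_mul_sub_ne_zero {x : ℝ} (hx : Irrational x) (p : ℤ) {q : ℤ} (hq : q ≠ 0) :
    (q : ℝ) * x - p ≠ 0 :=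
  ((hx.intCast_mul hq).sub_intCast p).ne_zero

theorem one_le_abs_mul_sub_goldenRatio_mul_abs_mul_sub_goldenConj (p : ℤ) {q : ℤ} (hq : q ≠ 0) :
    1 ≤ |(q : ℝ) * φ - p| * |(q : ℝ) * ψ - p| := by
  have hnorm : (q * φ - p) * (q * ψ - p) = ((p ^ 2 - p * q - q ^ 2 : ℤ) : ℝ) := by
    push_cast; exact mul_sub_goldenRatio_mul_mul_sub_goldenConj p q
  have hne : p ^ 2 - p * q - q ^ 2 ≠ 0 := by
    rw [← Int.cast_ne_zero (α := ℝ), ← hnorm]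
    exact mul_ne_zero (intCast_mul_sub_ne_zero goldenRatio_irrational p hq)
      (intCast_mul_sub_ne_zero goldenConj_irrational p hq)
  rw [← abs_mul, hnorm, ← Int.cast_abs]
  exact_mod_cast Int.one_le_abs hne

theorem one_le_abs_mul_sub_goldenRatio_mul_add (p : ℤ) {q : ℤ} (hq : 0 < q) :
    1 ≤ |(q : ℝ) * φ - p| * (|(q : ℝ) * φ - p| + q * √5) := by
  have hq' : (0 : ℝ) ≤ q * √5 := by positivity
  calc (1 : ℝ) ≤ |(q : ℝ) * φ - p| * |(q : ℝ) * ψ - p| :=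
        one_le_abs_mul_sub_goldenRatio_mul_abs_mul_sub_goldenConj p hq.ne'
    _ ≤ |(q : ℝ) * φ - p| * (|(q : ℝ) * φ - p| + q * √5) := by
        rw [mul_sub_goldenConj_eq]
        gcongr
        exact (abs_sub _ _).trans_eq (by rw [abs_of_nonneg hq'])

end Real

/-- Let `φ = (1+√5)/2` be the golden ratio. For all integers `p` and `q ≥ 1`, if
`|qφ - p| ≤ 1`, then `1/(q·|qφ - p|) ≤ √5 + 1/q`. -/
theorem golden_ratio_approx_bound (p q : ℤ) (hq : 1 ≤ q)
    (h : |(q : ℝ) * ((1 + Real.sqrt 5) / 2) - (p : ℝ)| ≤ 1) :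
    1 / ((q : ℝ) * |(q : ℝ) * ((1 + Real.sqrt 5) / 2) - (p : ℝ)|) ≤
      Real.sqrt 5 + 1 / (q : ℝ) := by
  change |(q : ℝ) * φ - p| ≤ 1 at h
  change 1 / ((q : ℝ) * |(q : ℝ) * φ - p|) ≤ √5 + 1 / q
  have hq₀ : (0 : ℝ) < q := by exact_mod_cast hq
  have key := one_le_abs_mul_sub_goldenRatio_mul_add p (q := q) (by omega)
  have he : 0 < |(q : ℝ) * φ - p| :=
    abs_pos.mpr (intCast_mul_sub_ne_zero goldenRatio_irrational p (by omega))
  rw [div_le_iff₀ (by positivity)]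
  calc (1 : ℝ) ≤ |(q : ℝ) * φ - p| * (|(q : ℝ) * φ - p| + q * √5) := key
    _ ≤ |(q : ℝ) * φ - p| * (1 + q * √5) := by gcongr
    _ = (√5 + 1 / q) * (q * |(q : ℝ) * φ - p|) := by field_simp; ring
end

section
/- √5 belongs to the Lagrange spectrum L, every element of L is ≥ √5 (i.e., min L = √5), and moreover ℓ((1+√5)/2) = √5. -/
open scoped ENNReal

/-- The distance from a real number to the nearest integer. -/
noncomputable def distNearestInt (x : ℝ) : ℝ := |x - round x|

/-- The best constant of Diophantine approximation of `α`,
`ℓ(α) = limsup_{q → ∞} 1 / (q ⬝ ‖q α‖) ∈ [0, ∞]`. -/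
noncomputable def lagrangeVal (α : ℝ) : ℝ≥0∞ :=
  Filter.limsup (fun q : ℕ => ENNReal.ofReal (1 / (q * distNearestInt (q * α)))) Filter.atTop

/-- The Lagrange spectrum: the set of finite values `ℓ(α)` over irrational `α`. -/
def LagrangeSpectrum : Set ℝ :=
  {t | ∃ α : ℝ, Irrational α ∧ lagrangeVal α ≠ ⊤ ∧ (lagrangeVal α).toReal = t}

/-!
Hurwitz: if `a/b < α < c/d` with `bc - ad = 1`, then `a/b`, `c/d` or the mediant
`(a+c)/(b+d)` is within `1/(√5 q²)` of `α`. Otherwise, as `c/d - a/b = 1/(bd)`, we get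
`b² + d² ≤ √5 bd`, and likewise for the mediant and the endpoint on the same side of `α`,
which is impossible for integers. Stern–Brocot bisection gives such intervals around `α` of
arbitrarily small length, so `q ‖qα‖ < 1/√5` for infinitely many `q` and `ℓ(α) ≥ √5`.

For `φ` itself, `(p - qφ)(p - qψ) = p² - pq - q²` is a nonzero integer and
`|p - qψ| ≤ |p - qφ| + q√5`, so `q ‖qφ‖ ≥ 1/(√5 + 1/(2q))`, giving `ℓ(φ) ≤ √5`.
-/

open Real Filter Topology
open scoped goldenRatio

lemma distNearestInt_pos {x : ℝ} (hx : Irrational x) : 0 < distNearestInt x :=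
  abs_pos.2 (sub_ne_zero.2 (hx.ne_int _))

lemma distNearestInt_mul_le_mul_abs_sub {q : ℝ} (hq : 0 < q) (α : ℝ) (p : ℤ) :
    distNearestInt (q * α) ≤ q * |α - p / q| :=
  calc distNearestInt (q * α) ≤ |q * α - p| := round_le _ p
    _ = q * |α - p / q| := by
      rw [← abs_of_pos hq, ← abs_mul, abs_of_pos hq, mul_sub, mul_div_cancel₀ _ hq.ne']

def IsHurwitzApprox (α : ℝ) (p q : ℤ) : Prop :=
  |α - p / q| < 1 / (√5 * q ^ 2)

structure IsFareyBracket (α : ℝ) (a b c d : ℤ) : Prop where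
  den_left_pos : 0 < b
  den_right_pos : 0 < d
  det_eq_one : b * c - a * d = 1
  left_lt : (a : ℝ) / b < α
  lt_right : α < (c : ℝ) / d

/-- Otherwise `x / y` and `1 + y / x` both lie in `[φ⁻¹, φ]`, so `x / y = φ`. -/
lemma sqrt_five_mul_lt_of_sq_add_sq_le {x y : ℤ} (hy : 0 < y)
    (h : (x : ℝ) ^ 2 + y ^ 2 ≤ √5 * (x * y)) :
    √5 * (x * (x + y)) < (x : ℝ) ^ 2 + (x + y) ^ 2 := by
  by_contra! h'
  have hy' : (0 : ℝ) < y := by exact_mod_cast hy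
  have h5 : √5 ^ 2 = 5 := sq_sqrt (by norm_num)
  have hge : √5 * y ≤ 2 * x - y := by
    nlinarith [sq_nonneg (2 * x - (√5 - 1) * (x + y)), sq_nonneg ((x : ℝ) + y)]
  have hle : 2 * x - y ≤ √5 * y := by nlinarith [sq_nonneg (2 * x - √5 * y - y)]
  exact goldenRatio_irrational.ne_rational x y (by rw [eq_div_iff hy'.ne', goldenRatio]; linarith)

namespace IsFareyBracket

variable {α : ℝ} {a b c d : ℤ}

lemma sub_eq (h : IsFareyBracket α a b c d) : (c : ℝ) / d - a / b = 1 / (b * d) := by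
  have hb : (b : ℝ) ≠ 0 := by exact_mod_cast h.den_left_pos.ne'
  have hd : (d : ℝ) ≠ 0 := by exact_mod_cast h.den_right_pos.ne'
  have hdet : (b : ℝ) * c - a * d = 1 := by exact_mod_cast h.det_eq_one
  field_simp
  linear_combination hdet

lemma abs_sub_left_lt (h : IsFareyBracket α a b c d) : |α - a / b| < 1 / (b * d) := by
  rw [abs_of_pos (sub_pos.2 h.left_lt), ← h.sub_eq]
  linarith [h.lt_right]

lemma abs_sub_right_lt (h : IsFareyBracket α a b c d) : |α - c / d| < 1 / (b * d) := by
  rw [abs_sub_comm, abs_of_pos (sub_pos.2 h.lt_right), ← h.sub_eq]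
  linarith [h.left_lt]

lemma mediant_left (h : IsFareyBracket α a b c d)
    (hm : α < ((a + c : ℤ) : ℝ) / ((b + d : ℤ) : ℝ)) : IsFareyBracket α a b (a + c) (b + d) :=
  ⟨h.den_left_pos, by linarith [h.den_left_pos, h.den_right_pos],
    by linear_combination h.det_eq_one, h.left_lt, hm⟩

lemma mediant_right (h : IsFareyBracket α a b c d)
    (hm : ((a + c : ℤ) : ℝ) / ((b + d : ℤ) : ℝ) < α) : IsFareyBracket α (a + c) (b + d) c d :=
  ⟨by linarith [h.den_left_pos, h.den_right_pos], h.den_right_pos,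
    by linear_combination h.det_eq_one, hm, h.lt_right⟩

lemma sq_add_sq_le (h : IsFareyBracket α a b c d) (ha : ¬IsHurwitzApprox α a b)
    (hc : ¬IsHurwitzApprox α c d) : (b : ℝ) ^ 2 + d ^ 2 ≤ √5 * (b * d) := by
  have hb : (0 : ℝ) < b := by exact_mod_cast h.den_left_pos
  have hd : (0 : ℝ) < d := by exact_mod_cast h.den_right_pos
  rw [IsHurwitzApprox, not_lt, abs_of_pos (sub_pos.2 h.left_lt)] at ha
  rw [IsHurwitzApprox, not_lt, abs_sub_comm, abs_of_pos (sub_pos.2 h.lt_right)] at hc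
  calc (b : ℝ) ^ 2 + d ^ 2 = √5 * b ^ 2 * d ^ 2 * (1 / (√5 * b ^ 2) + 1 / (√5 * d ^ 2)) := by
        field_simp; ring
    _ ≤ √5 * b ^ 2 * d ^ 2 * (1 / (b * d)) := by
        gcongr
        rw [← h.sub_eq]
        linarith
    _ = √5 * (b * d) := by field_simp

theorem exists_isHurwitzApprox (hα : Irrational α) (h : IsFareyBracket α a b c d) :
    ∃ p q : ℤ, 0 < q ∧ IsHurwitzApprox α p q ∧ |α - p / q| < 1 / (b * d) := by
  by_cases ha : IsHurwitzApprox α a b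
  · exact ⟨a, b, h.den_left_pos, ha, h.abs_sub_left_lt⟩
  by_cases hc : IsHurwitzApprox α c d
  · exact ⟨c, d, h.den_right_pos, hc, h.abs_sub_right_lt⟩
  have hbd := h.sq_add_sq_le ha hc
  have hb := h.den_left_pos
  have hd := h.den_right_pos
  have hb' : (1 : ℝ) ≤ b := by exact_mod_cast hb
  have hd' : (1 : ℝ) ≤ d := by exact_mod_cast hd
  rcases (hα.ne_rational (a + c) (b + d)).lt_or_gt with hl | hr
  · have hm := h.mediant_left hl
    refine ⟨a + c, b + d, by omega, ?_, hm.abs_sub_right_lt.trans_le ?_⟩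
    · by_contra hbad
      have := hm.sq_add_sq_le ha hbad
      push_cast at this
      exact (sqrt_five_mul_lt_of_sq_add_sq_le hd hbd).not_ge this
    · push_cast
      gcongr
      linarith
  · have hm := h.mediant_right hr
    refine ⟨a + c, b + d, by omega, ?_, hm.abs_sub_left_lt.trans_le ?_⟩
    · by_contra hbad
      have := hm.sq_add_sq_le hbad hc
      push_cast at this
      exact (sqrt_five_mul_lt_of_sq_add_sq_le hb (by linarith)).not_ge (by linarith)
    · push_cast
      gcongr
      linarith

end IsFareyBracket

lemma exists_isFareyBracket {α : ℝ} (hα : Irrational α) (n : ℕ) :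
    ∃ a b c d : ℤ, IsFareyBracket α a b c d ∧ (n : ℤ) < b + d := by
  induction n with
  | zero =>
    refine ⟨⌊α⌋, 1, ⌊α⌋ + 1, 1, ⟨one_pos, one_pos, by ring, ?_, ?_⟩, by norm_num⟩
    · simpa using (Int.floor_le α).lt_of_ne (hα.ne_int _).symm
    · simp [Int.lt_floor_add_one]
  | succ n ih =>
    obtain ⟨a, b, c, d, h, hn⟩ := ih
    rcases (hα.ne_rational (a + c) (b + d)).lt_or_gt with hl | hr
    · exact ⟨_, _, _, _, h.mediant_left hl, by have := h.den_left_pos; push_cast; omega⟩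
    · exact ⟨_, _, _, _, h.mediant_right hr, by have := h.den_right_pos; push_cast; omega⟩

theorem exists_isHurwitzApprox_abs_sub_lt {α : ℝ} (hα : Irrational α) {δ : ℝ} (hδ : 0 < δ) :
    ∃ p q : ℤ, 0 < q ∧ IsHurwitzApprox α p q ∧ |α - p / q| < δ := by
  obtain ⟨n, hn⟩ := exists_nat_gt (1 / δ)
  obtain ⟨a, b, c, d, h, hn_lt⟩ := exists_isFareyBracket hα n
  obtain ⟨p, q, hq, happrox, hclose⟩ := h.exists_isHurwitzApprox hα
  refine ⟨p, q, hq, happrox, hclose.trans_le ?_⟩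
  have hb := h.den_left_pos
  have hd := h.den_right_pos
  have hn' : (n : ℤ) ≤ b * d := by nlinarith
  have hn'' : (n : ℝ) ≤ b * d := by exact_mod_cast hn'
  rw [div_le_iff₀ (by positivity)]
  rw [div_lt_iff₀ hδ] at hn
  nlinarith

theorem frequently_mul_distNearestInt_lt {α : ℝ} (hα : Irrational α) :
    ∃ᶠ q : ℕ in atTop, (q : ℝ) * distNearestInt (q * α) < 1 / √5 := by
  rw [frequently_atTop]
  intro N
  have hsmall : ∀ᶠ δ in 𝓝[>] (0 : ℝ), ∀ k ∈ Finset.Icc 1 N, δ < distNearestInt (k * α) / k :=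
    (eventually_all_finset _).2 fun k hk => nhdsWithin_le_nhds <| eventually_lt_nhds <|
      have hk : 0 < k := (Finset.mem_Icc.1 hk).1
      div_pos (distNearestInt_pos (hα.natCast_mul hk.ne')) (by exact_mod_cast hk)
  obtain ⟨δ, hδ, hδpos⟩ := (hsmall.and self_mem_nhdsWithin).exists
  obtain ⟨p, q, hq, happrox, hclose⟩ := exists_isHurwitzApprox_abs_sub_lt hα hδpos
  lift q to ℕ using hq.le
  simp only [IsHurwitzApprox, Int.cast_natCast] at happrox hclose
  have hq' : (0 : ℝ) < q := by exact_mod_cast hq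
  have hdist := distNearestInt_mul_le_mul_abs_sub hq' α p
  refine ⟨q, ?_, ?_⟩
  · by_contra! hqN
    have := hδ q (Finset.mem_Icc.2 ⟨by omega, hqN.le⟩)
    rw [lt_div_iff₀ hq'] at this
    nlinarith
  · calc (q : ℝ) * distNearestInt (q * α) ≤ q * (q * |α - p / q|) := by gcongr
      _ < q * (q * (1 / (√5 * q ^ 2))) := by gcongr
      _ = 1 / √5 := by field_simp

theorem ofReal_sqrt_five_le_lagrangeVal {α : ℝ} (hα : Irrational α) :
    ENNReal.ofReal √5 ≤ lagrangeVal α := by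
  refine le_limsup_of_frequently_le' <|
    ((frequently_mul_distNearestInt_lt hα).and_eventually (eventually_gt_atTop 0)).mono ?_
  rintro q ⟨hlt, hq⟩
  have hpos : 0 < (q : ℝ) * distNearestInt (q * α) :=
    mul_pos (by exact_mod_cast hq) (distNearestInt_pos (hα.natCast_mul hq.ne'))
  exact ENNReal.ofReal_le_ofReal ((le_one_div (sqrt_pos.2 (by norm_num)) hpos).2 hlt.le)

lemma one_le_abs_sub_mul_goldenRatio_mul (p : ℤ) {q : ℤ} (hq : q ≠ 0) :
    1 ≤ |p - q * φ| * |p - q * ψ| := by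
  have hprod : ((p : ℝ) - q * φ) * (p - q * ψ) = ((p ^ 2 - p * q - q ^ 2 : ℤ) : ℝ) := by
    push_cast
    linear_combination
      (-(p * q) : ℝ) * goldenRatio_add_goldenConj + q ^ 2 * goldenRatio_mul_goldenConj
  have hne : p ^ 2 - p * q - q ^ 2 ≠ 0 := by
    intro h0
    rw [h0, Int.cast_zero, mul_eq_zero, sub_eq_zero, sub_eq_zero] at hprod
    rcases hprod with h | h
    · exact goldenRatio_irrational.ne_rational p q (by rw [h]; field_simp)
    · exact goldenConj_irrational.ne_rational p q (by rw [h]; field_simp)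
  rw [← abs_mul, hprod]
  exact_mod_cast Int.one_le_abs hne

lemma one_div_mul_distNearestInt_goldenRatio_le {q : ℕ} (hq : 0 < q) :
    1 / (q * distNearestInt (q * φ)) ≤ √5 + 1 / (2 * q) := by
  set p := round ((q : ℝ) * φ)
  have hq' : (0 : ℝ) < q := by exact_mod_cast hq
  have hD : distNearestInt (q * φ) = |p - q * φ| := abs_sub_comm _ _
  have hconj : |p - q * ψ| ≤ 1 / 2 + q * √5 :=
    calc |p - q * ψ| = |(p - q * φ) + q * √5| := by rw [← goldenRatio_sub_goldenConj]; ring_nf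
      _ ≤ |p - q * φ| + |q * √5| := abs_add_le _ _
      _ ≤ 1 / 2 + q * √5 := by
        rw [abs_of_pos (by positivity : (0 : ℝ) < q * √5), ← hD]
        gcongr
        exact abs_sub_round _
  have hDpos : 0 < |p - q * φ| :=
    hD ▸ distNearestInt_pos (goldenRatio_irrational.natCast_mul hq.ne')
  have key := one_le_abs_sub_mul_goldenRatio_mul p (q := q) (by exact_mod_cast hq.ne')
  rw [Int.cast_natCast] at key
  rw [hD, div_le_iff₀ (mul_pos hq' hDpos)]
  calc 1 ≤ |p - q * φ| * |p - q * ψ| := key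
    _ ≤ |p - q * φ| * (1 / 2 + q * √5) := by gcongr
    _ = (√5 + 1 / (2 * q)) * (q * |p - q * φ|) := by field_simp; ring

lemma lagrangeVal_goldenRatio_le : lagrangeVal φ ≤ ENNReal.ofReal √5 := by
  have hlim : Tendsto (fun q : ℕ => ENNReal.ofReal (√5 + 1 / (2 * q))) atTop
      (𝓝 (ENNReal.ofReal √5)) := by
    refine ENNReal.tendsto_ofReal ?_
    have h2q : Tendsto (fun q : ℕ => 2 * (q : ℝ)) atTop atTop :=
      tendsto_natCast_atTop_atTop.const_mul_atTop two_pos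
    simpa using tendsto_const_nhds.add h2q.inv_tendsto_atTop
  calc lagrangeVal φ ≤ limsup (fun q : ℕ => ENNReal.ofReal (√5 + 1 / (2 * q))) atTop :=
        limsup_le_limsup <| (eventually_gt_atTop 0).mono fun q hq =>
          ENNReal.ofReal_le_ofReal (one_div_mul_distNearestInt_goldenRatio_le hq)
    _ = ENNReal.ofReal √5 := hlim.limsup_eq

/-- `√5` belongs to the Lagrange spectrum, it is a lower bound for the Lagrange spectrum
(so that `min L = √5`), and `ℓ((1+√5)/2) = √5`. -/
theorem sqrt_five_min_of_lagrange :
    Real.sqrt 5 ∈ LagrangeSpectrum ∧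
    (∀ x ∈ LagrangeSpectrum, Real.sqrt 5 ≤ x) ∧
    lagrangeVal ((1 + Real.sqrt 5) / 2) = ENNReal.ofReal (Real.sqrt 5) := by
  have hφ : lagrangeVal φ = ENNReal.ofReal √5 :=
    le_antisymm lagrangeVal_goldenRatio_le (ofReal_sqrt_five_le_lagrangeVal goldenRatio_irrational)
  refine ⟨⟨φ, goldenRatio_irrational, by simp [hφ], by simp [hφ]⟩, ?_, hφ⟩
  rintro x ⟨α, hα, hne, rfl⟩
  exact (ENNReal.ofReal_le_iff_le_toReal hne).1 (ofReal_sqrt_five_le_lagrangeVal hα)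
end

section
/- (Vieta descent step) If (x, y, z) is a Markov triple of positive integers with x < y ≤ z, then z' := 3xy − z satisfies 0 < z' < y, and (x, y, z') is again a Markov triple. -/
/-- **Vieta descent step**: if `(x, y, z)` is a Markov triple of positive integers with
`x < y ≤ z`, then `z' := 3xy - z` satisfies `0 < z' < y`, and `(x, y, z')` is again a
Markov triple. -/
theorem vieta_descent (x y z : ℤ) (hx : 0 < x) (hy : 0 < y) (hz : 0 < z)
    (h : x ^ 2 + y ^ 2 + z ^ 2 = 3 * x * y * z) (hxy : x < y) (hyz : y ≤ z) :
    0 < 3 * x * y - z ∧ 3 * x * y - z < y ∧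
      x ^ 2 + y ^ 2 + (3 * x * y - z) ^ 2 = 3 * x * y * (3 * x * y - z) := by
  have hprod : z * (3 * x * y - z) = x ^ 2 + y ^ 2 := by linarith [h]; 
  refine ⟨?_, ?_, by linear_combination h⟩
  · nlinarith [sq_nonneg x, sq_nonneg y, mul_pos hx hy]
  · -- (y - z')(y - z) = y^2 - 3xy*y + x^2 + y^2 < 0, and y - z ≤ 0
    nlinarith [sq_nonneg (y - x), mul_pos hx hy, mul_nonneg (sub_nonneg.2 hyz) hy.le]
end

section
/- (Markov's descent theorem) Let S be the smallest set of triples of positive integers that contains (1,1,1) and is closed under all permutations of the three coordinates and under the Vieta involution (x,y,z) ↦ (x,y,3xy−z) whenever 3xy − z > 0. Then S is exactly the set of all Markov triples. -/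
/-- The smallest set of triples of positive integers containing `(1,1,1)` that is closed under
all permutations of the coordinates and under the Vieta involution
`(x,y,z) ↦ (x,y,3xy - z)` whenever `3xy - z > 0`. (Closure under the three transpositions is
equivalent to closure under all six permutations.) -/
inductive MarkovGen : ℕ → ℕ → ℕ → Prop
  | base : MarkovGen 1 1 1
  | swap₁₂ {x y z : ℕ} : MarkovGen x y z → MarkovGen y x z
  | swap₂₃ {x y z : ℕ} : MarkovGen x y z → MarkovGen x z y
  | swap₁₃ {x y z : ℕ} : MarkovGen x y z → MarkovGen z y x
  | vieta {x y z : ℕ} : MarkovGen x y z → 0 < 3 * x * y - z → MarkovGen x y (3 * x * y - z)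

private lemma markov_descent : ∀ n x y z : ℕ, x + y + z = n → 0 < x → 0 < y → 0 < z →
    x ^ 2 + y ^ 2 + z ^ 2 = 3 * x * y * z → MarkovGen x y z := by
  intro n
  induction n using Nat.strong_induction_on with
  | _ n ih =>
  have key : ∀ x y z : ℕ, x + y + z = n → 0 < x → 0 < y → 0 < z → x ≤ y → y ≤ z →
      x ^ 2 + y ^ 2 + z ^ 2 = 3 * x * y * z → MarkovGen x y z := by
    intro x y z hs hx hy hz hxy hyz he
    have heZ : (x : ℤ) ^ 2 + y ^ 2 + z ^ 2 = 3 * x * y * z := by exact_mod_cast he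
    by_cases hz1 : z = 1
    · have : x = 1 ∧ y = 1 := by omega
      obtain ⟨rfl, rfl⟩ := this
      subst hz1
      exact MarkovGen.base
    · have hz2 : 2 ≤ z := by omega
      -- 3xy > z
      have h3 : z < 3 * x * y := by nlinarith
      -- x^2 + y^2 < z^2
      have hlt : x ^ 2 + y ^ 2 < z ^ 2 := by
        by_contra hc
        push_neg at hc
        have hx1 : x = 1 := by nlinarith
        subst hx1
        have hy1 : y = 1 := by nlinarith
        subst hy1
        -- equation: 2 + z^2 = 3z with z ≥ 2 forces z = 2, contradicting hc
        have : z = 2 := by nlinarith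
        omega
      set w := 3 * x * y - z with hw
      have hwz : w * z = x ^ 2 + y ^ 2 := by
        have : ((3 * x * y - z : ℕ) : ℤ) * z = (x : ℤ) ^ 2 + y ^ 2 := by
          push_cast [Nat.cast_sub h3.le]
          linear_combination -heZ
        exact_mod_cast this
      have hwpos : 0 < w := by
        rcases Nat.eq_zero_or_pos w with h | h
        · rw [h] at hwz; nlinarith
        · exact h
      have hwlt : w < z := by
        by_contra hc
        push_neg at hc
        nlinarith
      have hew : x ^ 2 + y ^ 2 + w ^ 2 = 3 * x * y * w := by
        have : (x : ℤ) ^ 2 + y ^ 2 + ((3 * x * y - z : ℕ) : ℤ) ^ 2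
            = 3 * x * y * ((3 * x * y - z : ℕ) : ℤ) := by
          push_cast [Nat.cast_sub h3.le]
          linear_combination heZ
        exact_mod_cast this
      have hgen : MarkovGen x y w :=
        ih (x + y + w) (by omega) x y w rfl hx hy hwpos hew
      have hzeq : z = 3 * x * y - w := by omega
      have hvieta := MarkovGen.vieta hgen (by omega : 0 < 3 * x * y - w)
      rwa [← hzeq] at hvieta
  intro x y z hs hx hy hz he
  rcases le_total x y with h1 | h1 <;> rcases le_total y z with h2 | h2 <;>
    rcases le_total x z with h3 | h3
  · exact key x y z hs hx hy hz h1 h2 he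
  · exact key x y z hs hx hy hz h1 (by omega) he
  · exact MarkovGen.swap₂₃ (key x z y (by omega) hx hz hy h3 h2
      (by linear_combination he))
  · exact MarkovGen.swap₂₃ (MarkovGen.swap₁₂ (key z x y (by omega) hz hx hy h3 h1
      (by linear_combination he)))
  · exact MarkovGen.swap₁₂ (key y x z (by omega) hy hx hz h1 h3
      (by linear_combination he))
  · exact MarkovGen.swap₂₃ (MarkovGen.swap₁₃ (key y z x (by omega) hy hz hx h2 h3
      (by linear_combination he)))
  · exact key x y z hs hx hy hz (by omega) (by omega) he
  · exact MarkovGen.swap₁₃ (key z y x (by omega) hz hy hx h2 h1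
      (by linear_combination he))

/-- **Markov's descent theorem**: the set generated from `(1,1,1)` by permutations and Vieta
involutions is exactly the set of Markov triples. -/
theorem markovGen_iff_isMarkovTriple (x y z : ℕ) :
    MarkovGen x y z ↔
      (0 < x ∧ 0 < y ∧ 0 < z ∧ x ^ 2 + y ^ 2 + z ^ 2 = 3 * x * y * z) := by
  constructor
  · intro h
    induction h with
    | base => norm_num
    | swap₁₂ h ih => exact ⟨ih.2.1, ih.1, ih.2.2.1, by linear_combination ih.2.2.2⟩
    | swap₂₃ h ih => exact ⟨ih.1, ih.2.2.1, ih.2.1, by linear_combination ih.2.2.2⟩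
    | swap₁₃ h ih => exact ⟨ih.2.2.1, ih.2.1, ih.1, by linear_combination ih.2.2.2⟩
    | @vieta a b c h hpos ih =>
      obtain ⟨hx, hy, hz, he⟩ := ih
      refine ⟨hx, hy, hpos, ?_⟩
      have hle : c ≤ 3 * a * b := by omega
      have heZ : (a : ℤ) ^ 2 + b ^ 2 + c ^ 2 = 3 * a * b * c := by exact_mod_cast he
      have : (a : ℤ) ^ 2 + b ^ 2 + ((3 * a * b - c : ℕ) : ℤ) ^ 2
          = 3 * a * b * ((3 * a * b - c : ℕ) : ℤ) := by
        push_cast [Nat.cast_sub hle]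
        linear_combination heZ
      exact_mod_cast this
  · rintro ⟨hx, hy, hz, he⟩
    exact markov_descent (x + y + z) x y z rfl hx hy hz he
end

section
/- (Hall, 1947) The Minkowski sum C(4) + C(4) = {x + y : x ∈ C(4), y ∈ C(4)} equals the closed interval [√2 − 1, 4(√2 − 1)]. -/
/-- The Gauss map `G(x) = {1/x}`. -/
noncomputable def gaussMap (x : ℝ) : ℝ := Int.fract x⁻¹

/-- `C(N)`: the set of irrational numbers in `(0,1)` whose continued fraction expansion
`[0; a₁, a₂, …]` has all partial quotients `aᵢ ≤ N`, i.e. `⌊1/Gⁿ(x)⌋ ≤ N` for all `n ≥ 0`. -/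
def cantorSetCF (N : ℕ) : Set ℝ :=
  {x | x ∈ Set.Ioo (0 : ℝ) 1 ∧ Irrational x ∧ ∀ n : ℕ, ⌊(gaussMap^[n] x)⁻¹⌋ ≤ (N : ℤ)}

/-!
Every `x ∈ C(4)` satisfies `x = 1 / (a + G x)` with `1 ≤ a ≤ 4` and `G x ∈ C(4)`; applied to the
extremes of `C(4)` this pins `C(4)` between `(√2 - 1) / 2 = [0; 4, 1, 4, 1, …]` and
`2 (√2 - 1) = [0; 1, 4, 1, 4, …]`, which gives one inclusion.

For the other, `C(4)` is the limit set of a binary tree of intervals: the image of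
`J = [(√2 - 1) / 2, 2 (√2 - 1)]` under `t ↦ [0; a₁, …, aₙ + t]` is split into the images of the
four subcylinders `1 / (a + J)`, three gaps being removed one at a time. These maps are Möbius
maps of bounded distortion, so it suffices to check on the three splits of `J` itself that each gap
is at most a quarter, and each piece at least a quarter, of the interval it is cut from. Hall's
argument then applies to any such tree: if `s` lies in the sum of two cells of comparable length,
split the longer one; the gap is shorter than the other cell, so `s` still lies in the sum of one
child and the other cell, and lengths stay within a factor `4`. Compactness yields the limit.
-/

open Set Pointwise

lemma exists_mem_Icc_sub_mem_Icc {a b c d s : ℝ} (hab : a ≤ b) (hcd : c ≤ d) (h₁ : a + c ≤ s)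
    (h₂ : s ≤ b + d) : ∃ x ∈ Icc a b, s - x ∈ Icc c d := by
  refine ⟨max a (s - d), ⟨le_max_left _ _, max_le hab (by linarith)⟩, ?_, ?_⟩
  · linarith [max_le (by linarith : a ≤ s - c) (by linarith : s - d ≤ s - c)]
  · linarith [le_max_right a (s - d)]

structure QuarterGapTree (ι : Type*) where
  lo : ι → ℝ
  hi : ι → ℝ
  child : ι → Bool → ι
  lo_lt_hi (i : ι) : lo i < hi i
  lo_child_false (i : ι) : lo (child i false) = lo i
  hi_child_true (i : ι) : hi (child i true) = hi i
  hi_child_false_le (i : ι) : hi (child i false) ≤ lo (child i true)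
  gap_le (i : ι) : lo (child i true) - hi (child i false) ≤ (hi i - lo i) / 4
  le_len_child (i : ι) (b : Bool) : (hi i - lo i) / 4 ≤ hi (child i b) - lo (child i b)

namespace QuarterGapTree

variable {ι : Type*} (T : QuarterGapTree ι)

def len (i : ι) : ℝ := T.hi i - T.lo i

def cell (i : ι) : Set ℝ := Icc (T.lo i) (T.hi i)

def node (i : ι) (w : List Bool) : ι := w.foldl T.child i

def level (i : ι) (n : ℕ) : Set ℝ := ⋃ w ∈ {w : List Bool | w.length = n}, T.cell (T.node i w)

def limitSet (i : ι) : Set ℝ := ⋂ n, T.level i n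

lemma len_pos (i : ι) : 0 < T.len i := sub_pos.2 (T.lo_lt_hi i)

lemma node_append (i : ι) (w w' : List Bool) : T.node i (w ++ w') = T.node (T.node i w) w' :=
  List.foldl_append

lemma cell_child_subset (i : ι) (b : Bool) : T.cell (T.child i b) ⊆ T.cell i := by
  have h₀ := T.lo_lt_hi (T.child i false)
  have h₁ := T.lo_lt_hi (T.child i true)
  have := T.hi_child_false_le i
  have := T.lo_child_false i
  have := T.hi_child_true i
  cases b <;> exact Icc_subset_Icc (by linarith) (by linarith)

lemma len_child_le (i : ι) (b : Bool) : T.len (T.child i b) ≤ 3 / 4 * T.len i := by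
  have h₀ := T.le_len_child i false
  have h₁ := T.le_len_child i true
  have := T.hi_child_false_le i
  have := T.lo_child_false i
  have := T.hi_child_true i
  unfold len
  cases b <;> linarith

lemma cell_node_subset (i : ι) (w : List Bool) : T.cell (T.node i w) ⊆ T.cell i := by
  induction w generalizing i with
  | nil => exact subset_rfl
  | cons b w ih => exact (ih (T.child i b)).trans (T.cell_child_subset i b)

lemma len_node_le (i : ι) (w : List Bool) : T.len (T.node i w) ≤ (3 / 4) ^ w.length * T.len i := by
  induction w generalizing i with
  | nil => simp [node]
  | cons b w ih =>
    calc T.len (T.node (T.child i b) w) ≤ (3 / 4) ^ w.length * T.len (T.child i b) := ih _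
      _ ≤ (3 / 4) ^ w.length * (3 / 4 * T.len i) := by gcongr; exact T.len_child_le i b
      _ = (3 / 4) ^ (b :: w).length * T.len i := by simp [pow_succ]; ring

lemma le_len_node (i : ι) (w : List Bool) : (1 / 4) ^ w.length * T.len i ≤ T.len (T.node i w) := by
  induction w generalizing i with
  | nil => simp [node]
  | cons b w ih =>
    calc (1 / 4) ^ (b :: w).length * T.len i = (1 / 4) ^ w.length * (T.len i / 4) := by
          simp [pow_succ]; ring
      _ ≤ (1 / 4) ^ w.length * T.len (T.child i b) := by gcongr; exact T.le_len_child i b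
      _ ≤ T.len (T.node (T.child i b) w) := ih _

/-- An interval of length at least `len i / 4` that meets `cell i` cannot fit into the gap. -/
lemma exists_child_meets {i : ι} {t₁ t₂ : ℝ} (h₁ : t₁ ≤ T.hi i) (h₂ : T.lo i ≤ t₂)
    (h : T.len i / 4 ≤ t₂ - t₁) : ∃ b, t₁ ≤ T.hi (T.child i b) ∧ T.lo (T.child i b) ≤ t₂ := by
  by_cases hb : T.lo (T.child i true) ≤ t₂
  · exact ⟨true, T.hi_child_true i ▸ h₁, hb⟩
  · have := T.gap_le i
    exact ⟨false, by unfold len at h; linarith, T.lo_child_false i ▸ h₂⟩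

def IsBalancedPair (s : ℝ) (i j : ι) : Prop :=
  T.lo i + T.lo j ≤ s ∧ s ≤ T.hi i + T.hi j ∧ T.len i ≤ 4 * T.len j ∧ T.len j ≤ 4 * T.len i

lemma isBalancedPair_comm {s : ℝ} {i j : ι} : T.IsBalancedPair s i j ↔ T.IsBalancedPair s j i := by
  unfold IsBalancedPair
  constructor <;> rintro ⟨h₁, h₂, h₃, h₄⟩ <;> exact ⟨by linarith, by linarith, h₄, h₃⟩

lemma exists_child_isBalancedPair {s : ℝ} {i j : ι} (h : T.IsBalancedPair s i j)
    (hji : T.len j ≤ T.len i) : ∃ b, T.IsBalancedPair s (T.child i b) j := by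
  obtain ⟨hlo, hhi, hij, -⟩ := h
  obtain ⟨b, hb₁, hb₂⟩ := T.exists_child_meets (i := i) (t₁ := s - T.hi j) (t₂ := s - T.lo j)
    (by linarith) (by linarith) (by unfold len at hij ⊢; linarith)
  have := T.le_len_child i b
  have := T.len_child_le i b
  have := T.len_pos i
  exact ⟨b, by linarith, by linarith, by linarith, by unfold len at *; linarith⟩

lemma exists_isBalancedPair_node {s : ℝ} {i j : ι} (h : T.IsBalancedPair s i j) (N : ℕ) :
    ∃ w w' : List Bool, w.length + w'.length = N ∧
      T.IsBalancedPair s (T.node i w) (T.node j w') := by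
  induction N with
  | zero => exact ⟨[], [], rfl, h⟩
  | succ N ih =>
    obtain ⟨w, w', hN, hw⟩ := ih
    rcases le_total (T.len (T.node j w')) (T.len (T.node i w)) with hle | hle
    · obtain ⟨b, hb⟩ := T.exists_child_isBalancedPair hw hle
      refine ⟨w ++ [b], w', by simp; omega, ?_⟩
      simpa [node_append, node] using hb
    · obtain ⟨b, hb⟩ := T.exists_child_isBalancedPair (T.isBalancedPair_comm.1 hw) hle
      refine ⟨w, w' ++ [b], by simp; omega, T.isBalancedPair_comm.1 ?_⟩
      simpa [node_append, node] using hb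

/-- Lengths of cells shrink at least like `(3/4)^depth` and at most like `(1/4)^depth`. -/
lemma length_lt_of_isBalancedPair {s : ℝ} {i j : ι} {w w' : List Bool}
    (hji : T.len j ≤ 4 * T.len i) (h : T.IsBalancedPair s (T.node i w) (T.node j w')) :
    w'.length < 5 * w.length + 10 := by
  by_contra! hlen
  have hpow : (3 / 4 : ℝ) ^ w'.length < (1 / 4) ^ w.length / 16 := by
    calc (3 / 4 : ℝ) ^ w'.length ≤ (3 / 4) ^ (5 * (w.length + 2)) :=
          pow_le_pow_of_le_one (by norm_num) (by norm_num) (by omega)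
      _ = ((3 / 4) ^ 5) ^ (w.length + 2) := pow_mul _ _ _
      _ < (1 / 4) ^ (w.length + 2) := by gcongr; norm_num
      _ = (1 / 4) ^ w.length / 16 := by rw [pow_add]; ring
  have hi := T.len_pos i
  refine lt_irrefl ((1 / 4 : ℝ) ^ w.length * T.len i) ?_
  calc (1 / 4) ^ w.length * T.len i ≤ T.len (T.node i w) := T.le_len_node i w
    _ ≤ 4 * T.len (T.node j w') := h.2.2.1
    _ ≤ 4 * ((3 / 4) ^ w'.length * (4 * T.len i)) := by
        gcongr; exact (T.len_node_le j w').trans (by gcongr)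
    _ < (1 / 4) ^ w.length * T.len i := by nlinarith

lemma exists_isBalancedPair_deep {s : ℝ} {i j : ι} (h : T.IsBalancedPair s i j) (n : ℕ) :
    ∃ w w' : List Bool, n ≤ w.length ∧ n ≤ w'.length ∧
      T.IsBalancedPair s (T.node i w) (T.node j w') := by
  obtain ⟨w, w', hN, hw⟩ := T.exists_isBalancedPair_node h (6 * n + 10)
  have h₁ := T.length_lt_of_isBalancedPair h.2.2.2 hw
  have h₂ := T.length_lt_of_isBalancedPair h.2.2.1 (T.isBalancedPair_comm.1 hw)
  exact ⟨w, w', by omega, by omega, hw⟩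

lemma mem_level_of_mem_cell {i : ι} {w : List Bool} {n : ℕ} {x : ℝ} (hx : x ∈ T.cell (T.node i w))
    (hn : n ≤ w.length) : x ∈ T.level i n := by
  rw [← List.take_append_drop n w, node_append] at hx
  exact mem_biUnion (by simpa using hn) (T.cell_node_subset _ _ hx)

lemma level_succ_subset (i : ι) (n : ℕ) : T.level i (n + 1) ⊆ T.level i n := by
  simp only [level, iUnion_subset_iff]
  intro w hw x hx
  exact T.mem_level_of_mem_cell hx (by simp_all)

lemma level_zero_subset (i : ι) : T.level i 0 ⊆ T.cell i := by
  simp only [level, iUnion_subset_iff]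
  intro w _
  exact T.cell_node_subset i w

lemma isClosed_level (i : ι) (n : ℕ) : IsClosed (T.level i n) :=
  (List.finite_length_eq Bool n).isClosed_biUnion fun _ _ ↦ isClosed_Icc

theorem Icc_subset_limitSet_add {i j : ι} (hij : T.len i ≤ 4 * T.len j)
    (hji : T.len j ≤ 4 * T.len i) :
    Icc (T.lo i + T.lo j) (T.hi i + T.hi j) ⊆ T.limitSet i + T.limitSet j := by
  rintro s ⟨hlo, hhi⟩
  set K : ℕ → Set ℝ := fun n ↦ T.level i n ∩ (s - ·) ⁻¹' T.level j n
  have hK : ∀ n, (K n).Nonempty := by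
    intro n
    obtain ⟨w, w', hw, hw', hlo', hhi', -⟩ := T.exists_isBalancedPair_deep ⟨hlo, hhi, hij, hji⟩ n
    obtain ⟨x, hx, hsx⟩ := exists_mem_Icc_sub_mem_Icc (T.lo_lt_hi (T.node i w)).le
      (T.lo_lt_hi (T.node j w')).le hlo' hhi'
    exact ⟨x, T.mem_level_of_mem_cell hx hw, T.mem_level_of_mem_cell hsx hw'⟩
  have hclosed : ∀ n, IsClosed (K n) := fun n ↦
    (T.isClosed_level i n).inter
      ((T.isClosed_level j n).preimage (continuous_const.sub continuous_id))
  obtain ⟨x, hx⟩ := IsCompact.nonempty_iInter_of_sequence_nonempty_isCompact_isClosed K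
    (fun n ↦ inter_subset_inter (T.level_succ_subset i n) (preimage_mono (T.level_succ_subset j n)))
    hK (isCompact_Icc.of_isClosed_subset (hclosed 0)
      (inter_subset_left.trans (T.level_zero_subset i)))
    hclosed
  simp only [mem_iInter] at hx
  exact ⟨x, mem_iInter.2 fun n ↦ (hx n).1, s - x, mem_iInter.2 fun n ↦ (hx n).2, by ring⟩

end QuarterGapTree

/-- `cfMap [a₁, …, aₙ] t = [0; a₁, …, aₙ + t]`. -/
noncomputable def cfMap (L : List ℕ) (t : ℝ) : ℝ := L.foldr (fun a u ↦ ((a : ℝ) + u)⁻¹) t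

@[simp] lemma cfMap_nil (t : ℝ) : cfMap [] t = t := rfl

@[simp] lemma cfMap_cons (a : ℕ) (L : List ℕ) (t : ℝ) :
    cfMap (a :: L) t = ((a : ℝ) + cfMap L t)⁻¹ := rfl

lemma cfMap_append_singleton (L : List ℕ) (a : ℕ) (t : ℝ) :
    cfMap (L ++ [a]) t = cfMap L ((a + t)⁻¹) := by
  simp [cfMap]

lemma cfMap_nonneg (L : List ℕ) {t : ℝ} (ht : 0 ≤ t) : 0 ≤ cfMap L t := by
  induction L with
  | nil => exact ht
  | cons a L ih => exact inv_nonneg.2 (by positivity)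

lemma cfMap_mem_Ioo {L : List ℕ} (hL : ∀ a ∈ L, 0 < a) {t : ℝ} (ht : t ∈ Ioo 0 1) :
    cfMap L t ∈ Ioo 0 1 := by
  induction L with
  | nil => exact ht
  | cons a L ih =>
    have ha : (1 : ℝ) ≤ a := Nat.one_le_cast.2 (hL a List.mem_cons_self)
    have hu := ih fun b hb ↦ hL b (List.mem_cons_of_mem a hb)
    rw [cfMap_cons]
    exact ⟨inv_pos.2 (by linarith [hu.1]), inv_lt_one_of_one_lt₀ (by linarith [hu.1])⟩

lemma continuousOn_cfMap {L : List ℕ} (hL : ∀ a ∈ L, 0 < a) : ContinuousOn (cfMap L) (Ici 0) := by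
  induction L with
  | nil => exact continuousOn_id
  | cons a L ih =>
    have ha : (0 : ℝ) < a := Nat.cast_pos.2 (hL a List.mem_cons_self)
    exact (continuousOn_const.add (ih fun b hb ↦ hL b (List.mem_cons_of_mem a hb))).inv₀
      fun t ht ↦ (add_pos_of_pos_of_nonneg ha (cfMap_nonneg L ht)).ne'

/-- `cfMap L t = (p t + p') / (q t + q')` where `q, q'` are the last two continuants of `L` and
`p q' - p' q = (-1) ^ L.length`. -/
lemma exists_cfMap_sub_eq {L : List ℕ} (hL : ∀ a ∈ L, 0 < a) :
    ∃ q q' : ℝ, 0 ≤ q ∧ q ≤ q' ∧ 0 < q' ∧ ∀ a b : ℝ, 0 ≤ a → 0 ≤ b →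
      cfMap L b - cfMap L a = (-1) ^ L.length * (b - a) / ((q * a + q') * (q * b + q')) := by
  induction L using List.reverseRecOn with
  | nil => exact ⟨0, 1, le_rfl, zero_le_one, one_pos, fun a b _ _ ↦ by simp⟩
  | append_singleton L k ih =>
    obtain ⟨q, q', hq, hqq', hq', h⟩ := ih fun a ha ↦ hL a (List.mem_append_left _ ha)
    have hk : (1 : ℝ) ≤ k := Nat.one_le_cast.2 (hL k (by simp))
    refine ⟨q', q + k * q', hq'.le, by nlinarith, by nlinarith, fun a b ha hb ↦ ?_⟩
    rw [cfMap_append_singleton, cfMap_append_singleton, h _ _ (by positivity) (by positivity)]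
    have : (k : ℝ) + a ≠ 0 := by positivity
    have : (k : ℝ) + b ≠ 0 := by positivity
    have : q' * a + (q + k * q') ≠ 0 := by positivity
    have : q' * b + (q + k * q') ≠ 0 := by positivity
    simp only [List.length_append, List.length_singleton, pow_succ]
    field_simp
    ring

lemma neg_one_pow_mul_cfMap_sub_pos {L : List ℕ} (hL : ∀ a ∈ L, 0 < a) {a b : ℝ} (ha : 0 ≤ a)
    (hab : a < b) : 0 < (-1) ^ L.length * (cfMap L b - cfMap L a) := by
  obtain ⟨q, q', hq, -, hq', h⟩ := exists_cfMap_sub_eq hL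
  rw [h a b ha (by linarith), ← mul_div_assoc, ← mul_assoc, ← pow_add, ← two_mul, pow_mul]
  simp only [neg_one_sq, one_pow, one_mul]
  exact div_pos (by linarith) (mul_pos (by nlinarith) (by nlinarith))

lemma cfMap_strictMonoOn {L : List ℕ} (hL : ∀ a ∈ L, 0 < a) (he : Even L.length) :
    StrictMonoOn (cfMap L) (Ici 0) := fun a ha b _ hab ↦ by
  simpa [he.neg_one_pow] using neg_one_pow_mul_cfMap_sub_pos hL ha hab

lemma cfMap_strictAntiOn {L : List ℕ} (hL : ∀ a ∈ L, 0 < a) (ho : Odd L.length) :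
    StrictAntiOn (cfMap L) (Ici 0) := fun a ha b _ hab ↦ by
  simpa [ho.neg_one_pow] using neg_one_pow_mul_cfMap_sub_pos hL ha hab

/-- Bounded distortion: relative to `[c, d]`, `cfMap L` scales the length of `[a, b] ⊆ [c, d]` by a
factor between `(1 + c) / (1 + a)` and `(1 + d) / (1 + b)`. -/
lemma cfMap_distortion {L : List ℕ} (hL : ∀ a ∈ L, 0 < a) {a b c d : ℝ} (hc : 0 ≤ c)
    (hca : c ≤ a) (hab : a ≤ b) (hbd : b ≤ d) :
    (b - a) * (1 + c) * |cfMap L d - cfMap L c| ≤ (d - c) * (1 + a) * |cfMap L b - cfMap L a| ∧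
    (d - c) * (1 + b) * |cfMap L b - cfMap L a| ≤ (b - a) * (1 + d) * |cfMap L d - cfMap L c| := by
  obtain ⟨q, q', hq, hqq', hq', h⟩ := exists_cfMap_sub_eq hL
  have habs : ∀ x y, 0 ≤ x → x ≤ y →
      |cfMap L y - cfMap L x| = (y - x) / ((q * x + q') * (q * y + q')) := fun x y hx hxy ↦ by
    rw [h x y hx (hx.trans hxy), abs_div, abs_mul, abs_pow, abs_neg, abs_one, one_pow, one_mul,
      abs_of_nonneg (by linarith), abs_of_pos (mul_pos (by nlinarith) (by nlinarith))]
  rw [habs c d hc (by linarith), habs a b (by linarith) hab]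
  have hDa : 0 < q * a + q' := by nlinarith
  have hDb : 0 < q * b + q' := by nlinarith
  have hDc : 0 < q * c + q' := by positivity
  have hDd : 0 < q * d + q' := by nlinarith
  have hba : 0 ≤ (b - a) * (d - c) := mul_nonneg (by linarith) (by linarith)
  constructor
  · rw [mul_div_assoc', mul_div_assoc', div_le_div_iff₀ (by positivity) (by positivity)]
    have : (1 + c) * (q * a + q') * (q * b + q') ≤ (1 + a) * (q * c + q') * (q * d + q') :=
      mul_le_mul (by nlinarith) (by nlinarith) hDb.le (by nlinarith)
    nlinarith
  · rw [mul_div_assoc', mul_div_assoc', div_le_div_iff₀ (by positivity) (by positivity)]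
    have : (1 + b) * (q * c + q') * (q * d + q') ≤ (1 + d) * (q * a + q') * (q * b + q') := by
      rw [mul_right_comm (1 + b), mul_right_comm (1 + d)]
      exact mul_le_mul (by nlinarith) (by nlinarith) hDc.le (by nlinarith)
    nlinarith

lemma floor_natCast_add {a : ℕ} {t : ℝ} (ht : t ∈ Ico 0 1) : ⌊(a : ℝ) + t⌋ = a := by
  rw [add_comm, Int.floor_add_natCast, Int.floor_eq_zero_iff.2 ht, zero_add]

lemma gaussMap_inv_natCast_add {a : ℕ} {t : ℝ} (ht : t ∈ Ico 0 1) :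
    gaussMap ((a : ℝ) + t)⁻¹ = t := by
  rw [gaussMap, inv_inv, Int.fract, floor_natCast_add ht]
  push_cast
  ring

lemma iterate_gaussMap_cfMap {L : List ℕ} (hL : ∀ a ∈ L, 0 < a) {t : ℝ} (ht : t ∈ Ioo 0 1)
    {j : ℕ} (hj : j ≤ L.length) : gaussMap^[j] (cfMap L t) = cfMap (L.drop j) t := by
  induction L generalizing j with
  | nil => simp_all
  | cons a L ih =>
    have hL' : ∀ b ∈ L, 0 < b := fun b hb ↦ hL b (List.mem_cons_of_mem a hb)
    cases j with
    | zero => rfl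
    | succ j =>
      rw [Function.iterate_succ_apply, cfMap_cons,
        gaussMap_inv_natCast_add (Ioo_subset_Ico_self (cfMap_mem_Ioo hL' ht))]
      exact ih hL' (by simpa using hj)

lemma irrational_of_forall_iterate_gaussMap_mem_Ioo {x : ℝ}
    (hx : ∀ j, gaussMap^[j] x ∈ Ioo 0 1) : Irrational x := by
  suffices ∀ d : ℕ, 0 < d → ∀ x : ℝ, (∀ j, gaussMap^[j] x ∈ Ioo 0 1) → ∀ z : ℤ, x * d ≠ z by
    rintro ⟨q, rfl⟩
    exact this q.den q.pos _ hx q.num (by rw [Rat.cast_def, div_mul_cancel₀ _ (by positivity)])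
  intro d
  induction d using Nat.strong_induction_on with
  | _ d ih =>
    intro hd x hx z hz
    obtain ⟨hx0, hx1⟩ : x ∈ Ioo 0 1 := hx 0
    have hd' : (0 : ℝ) < d := Nat.cast_pos.2 hd
    have hz0 : 0 < z := by exact_mod_cast hz ▸ mul_pos hx0 hd'
    have hzd : z < d := by exact_mod_cast hz ▸ (mul_lt_iff_lt_one_left hd').2 hx1
    -- `x = z / d`, so `gaussMap x = d / z - ⌊d / z⌋` has denominator `z < d`.
    have hG : gaussMap x * z = ((d - ⌊x⁻¹⌋ * z : ℤ) : ℝ) := by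
      rw [gaussMap, Int.fract]
      push_cast
      rw [← hz]
      field_simp
    refine ih z.toNat (by omega) (by omega) (gaussMap x) (fun j ↦ ?_) (d - ⌊x⁻¹⌋ * z) ?_
    · simpa only [Function.iterate_succ_apply] using hx (j + 1)
    · rwa [show ((z.toNat : ℕ) : ℝ) = z by exact_mod_cast Int.toNat_of_nonneg hz0.le]

lemma mem_cantorSetCF_of_forall_exists_cfMap {N : ℕ} {x : ℝ}
    (h : ∀ n, ∃ L : List ℕ, n ≤ L.length ∧ (∀ a ∈ L, 0 < a ∧ a ≤ N) ∧
      ∃ t ∈ Ioo (0 : ℝ) 1, cfMap L t = x) :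
    x ∈ cantorSetCF N := by
  have horbit : ∀ j, gaussMap^[j] x ∈ Ioo 0 1 ∧ ⌊(gaussMap^[j] x)⁻¹⌋ ≤ N := by
    intro j
    obtain ⟨L, hj, hL, t, ht, rfl⟩ := h (j + 1)
    have hL' : ∀ a ∈ L, 0 < a := fun a ha ↦ (hL a ha).1
    have hdrop := List.drop_eq_getElem_cons (l := L) (i := j) (by omega)
    have hsub : ∀ a ∈ L[j] :: L.drop (j + 1), 0 < a :=
      hdrop ▸ fun a ha ↦ hL' a (List.mem_of_mem_drop ha)
    rw [iterate_gaussMap_cfMap hL' ht (by omega), hdrop]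
    refine ⟨cfMap_mem_Ioo hsub ht, ?_⟩
    rw [cfMap_cons, inv_inv, floor_natCast_add (Ioo_subset_Ico_self
      (cfMap_mem_Ioo (fun a ha ↦ hsub a (List.mem_cons_of_mem _ ha)) ht))]
    exact_mod_cast (hL _ (List.getElem_mem _)).2
  exact ⟨(horbit 0).1, irrational_of_forall_iterate_gaussMap_mem_Ioo fun j ↦ (horbit j).1,
    fun j ↦ (horbit j).2⟩

lemma gaussMap_mem_cantorSetCF {N : ℕ} {x : ℝ} (hx : x ∈ cantorSetCF N) :
    gaussMap x ∈ cantorSetCF N := by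
  obtain ⟨-, hirr, hfl⟩ := hx
  have hG : Irrational (gaussMap x) := hirr.inv.sub_intCast _
  refine ⟨⟨(Int.fract_nonneg _).lt_of_ne hG.ne_zero.symm, Int.fract_lt_one _⟩, hG, fun n ↦ ?_⟩
  simpa only [Function.iterate_succ_apply] using hfl (n + 1)

lemma inv_mem_Icc_of_mem_cantorSetCF {N : ℕ} {x : ℝ} (hx : x ∈ cantorSetCF N) :
    x⁻¹ ∈ Icc (1 + gaussMap x) (N + gaussMap x) := by
  obtain ⟨⟨hx0, hx1⟩, -, hfl⟩ := hx
  have h1 : (1 : ℝ) ≤ ⌊x⁻¹⌋ := by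
    exact_mod_cast Int.le_floor.2 (by simpa using ((one_lt_inv₀ hx0).2 hx1).le)
  have hN : (⌊x⁻¹⌋ : ℝ) ≤ N := by exact_mod_cast hfl 0
  rw [← Int.floor_add_fract x⁻¹]
  exact ⟨by unfold gaussMap; linarith, by unfold gaussMap; linarith⟩

/-- Writing `x = 1 / (a + G x)` with `1 ≤ a ≤ N` bounds the extremes of `C(N)` by each other. -/
lemma sInf_sSup_cantorSetCF {N : ℕ} (hne : (cantorSetCF N).Nonempty) :
    ((N : ℝ) + sSup (cantorSetCF N))⁻¹ ≤ sInf (cantorSetCF N) ∧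
      sSup (cantorSetCF N) ≤ (1 + sInf (cantorSetCF N))⁻¹ := by
  have hbdd : BddBelow (cantorSetCF N) := ⟨0, fun y hy ↦ hy.1.1.le⟩
  have hbdd' : BddAbove (cantorSetCF N) := ⟨1, fun y hy ↦ hy.1.2.le⟩
  constructor
  · refine le_csInf hne fun y hy ↦ inv_le_of_inv_le₀ hy.1.1 ?_
    linarith [(inv_mem_Icc_of_mem_cantorSetCF hy).2, le_csSup hbdd' (gaussMap_mem_cantorSetCF hy)]
  · refine csSup_le hne fun y hy ↦ le_inv_of_le_inv₀ ?_ ?_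
    · linarith [le_csInf hne fun z hz ↦ hz.1.1.le]
    · linarith [(inv_mem_Icc_of_mem_cantorSetCF hy).1, csInf_le hbdd (gaussMap_mem_cantorSetCF hy)]

namespace Hall

/-- `lower = [0; 4, 1, 4, 1, …]` and `upper = [0; 1, 4, 1, 4, …]`. -/
noncomputable def lower : ℝ := (√2 - 1) / 2

noncomputable def upper : ℝ := 2 * (√2 - 1)

lemma sqrt_two_bounds : 1.4142 < √2 ∧ √2 < 1.4143 :=
  ⟨(Real.lt_sqrt (by norm_num)).2 (by norm_num), (Real.sqrt_lt' (by norm_num)).2 (by norm_num)⟩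

lemma lower_pos : 0 < lower := by unfold lower; linarith [sqrt_two_bounds.1]

lemma inv_one_add_lower : (1 + lower)⁻¹ = upper :=
  inv_eq_of_mul_eq_one_right (by unfold lower upper; linear_combination Real.sq_sqrt zero_le_two)

lemma inv_four_add_upper : (4 + upper)⁻¹ = lower :=
  inv_eq_of_mul_eq_one_right (by unfold lower upper; linear_combination Real.sq_sqrt zero_le_two)

lemma cantorSetCF_four_subset : cantorSetCF 4 ⊆ Icc lower upper := by
  intro x hx
  obtain ⟨hμ, hM⟩ := sInf_sSup_cantorSetCF ⟨x, hx⟩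
  have hμ0 : 0 ≤ sInf (cantorSetCF 4) := le_csInf ⟨x, hx⟩ fun y hy ↦ hy.1.1.le
  have hxM : x ≤ sSup (cantorSetCF 4) := le_csSup ⟨1, fun y hy ↦ hy.1.2.le⟩ hx
  set μ := sInf (cantorSetCF 4)
  set M := sSup (cantorSetCF 4)
  have hM0 : 0 ≤ M := hx.1.1.le.trans hxM
  have h₁ : 1 ≤ (4 + M) * μ := (inv_le_iff_one_le_mul₀' (by positivity)).1 (by exact_mod_cast hμ)
  have h₂ : M * (1 + μ) ≤ 1 := by
    simpa [inv_mul_cancel₀ (by positivity : 1 + μ ≠ 0)] using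
      mul_le_mul_of_nonneg_right hM (by positivity : 0 ≤ 1 + μ)
  -- `μ ≥ 1 / (4 + 1 / (1 + μ))`, i.e. `(2μ + 1)² ≥ 2`
  have hsq : √2 ≤ 2 * μ + 1 := by
    rw [← Real.sqrt_sq (by positivity : 0 ≤ 2 * μ + 1)]
    exact Real.sqrt_le_sqrt (by nlinarith)
  have hlower : lower ≤ μ := by unfold lower; linarith
  refine ⟨hlower.trans (csInf_le ⟨0, fun y hy ↦ hy.1.1.le⟩ hx), ?_⟩
  calc x ≤ M := hxM
    _ ≤ (1 + μ)⁻¹ := hM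
    _ ≤ (1 + lower)⁻¹ := inv_anti₀ (by linarith [lower_pos]) (by linarith)
    _ = upper := inv_one_add_lower

/-- The cell of the node `(L, s)` below is the image under `t ↦ [0; L, t]` of `[lower, top s]`, the
hull of the cylinders `1 / (a + [lower, upper])` with `s + 1 ≤ a ≤ 4`. It is split into
`[lower, innerA s]` (the cylinders with `a ≥ s + 2`) and `[innerB s, top s]` (the cylinder
`a = s + 1`). -/
noncomputable def top (s : Fin 3) : ℝ := ((s : ℕ) + 1 + lower)⁻¹

noncomputable def innerA (s : Fin 3) : ℝ := ((s : ℕ) + 2 + lower)⁻¹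

noncomputable def innerB (s : Fin 3) : ℝ := ((s : ℕ) + 1 + upper)⁻¹

lemma top_innerA_innerB_bounds (s : Fin 3) :
    lower < innerA s ∧ innerA s < innerB s ∧ innerB s < top s ∧ top s < 1 ∧
      4 * ((innerB s - innerA s) * (1 + top s)) ≤ (top s - lower) * (1 + innerB s) ∧
      top s - lower ≤ 4 * (innerA s - lower) ∧
      (top s - lower) * (1 + innerB s) ≤ 4 * ((top s - innerB s) * (1 + lower)) := by
  have h2 := Real.sq_sqrt (zero_le_two : (0 : ℝ) ≤ 2)
  have hA2 : (2 + lower)⁻¹ = (6 - 2 * √2) / 7 :=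
    inv_eq_of_mul_eq_one_right (by unfold lower; linear_combination (-1 / 7) * h2)
  have hA3 : (3 + lower)⁻¹ = (10 - 2 * √2) / 23 :=
    inv_eq_of_mul_eq_one_right (by unfold lower; linear_combination (-1 / 23) * h2)
  have hA4 : (4 + lower)⁻¹ = (14 - 2 * √2) / 47 :=
    inv_eq_of_mul_eq_one_right (by unfold lower; linear_combination (-1 / 47) * h2)
  have hB1 : (1 + upper)⁻¹ = (2 * √2 + 1) / 7 :=
    inv_eq_of_mul_eq_one_right (by unfold upper; linear_combination (4 / 7) * h2)
  have hB2 : (2 + upper)⁻¹ = √2 / 4 :=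
    inv_eq_of_mul_eq_one_right (by unfold upper; linear_combination (1 / 2) * h2)
  have hB3 : (3 + upper)⁻¹ = (2 * √2 - 1) / 7 :=
    inv_eq_of_mul_eq_one_right (by unfold upper; linear_combination (4 / 7) * h2)
  obtain ⟨hr₁, hr₂⟩ := sqrt_two_bounds
  fin_cases s <;>
    norm_num [top, innerA, innerB, inv_one_add_lower, hA2, hA3, hA4, hB1, hB2, hB3] <;>
    (try simp only [lower, upper]) <;> refine ⟨?_, ?_, ?_, ?_, ?_, ?_, ?_⟩ <;> nlinarith

abbrev Node := List (Fin 4) × Fin 3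

def quotients (L : List (Fin 4)) : List ℕ := List.map (fun d : Fin 4 ↦ (d : ℕ) + 1) L

lemma mem_quotients {L : List (Fin 4)} {a : ℕ} (ha : a ∈ quotients L) : 0 < a ∧ a ≤ 4 := by
  unfold quotients at ha
  obtain ⟨d, -, rfl⟩ := List.mem_map.1 ha
  exact ⟨d.val.succ_pos, d.isLt⟩

noncomputable def nodeMap (L : List (Fin 4)) : ℝ → ℝ := cfMap (quotients L)

lemma nodeMap_append_singleton (L : List (Fin 4)) (d : Fin 4) (t : ℝ) :
    nodeMap (L ++ [d]) t = nodeMap L (((d : ℕ) + 1 + t)⁻¹) := by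
  simp [nodeMap, quotients, cfMap_append_singleton]

noncomputable def lo (i : Node) : ℝ := min (nodeMap i.1 lower) (nodeMap i.1 (top i.2))

noncomputable def hi (i : Node) : ℝ := max (nodeMap i.1 lower) (nodeMap i.1 (top i.2))

def aChild (i : Node) : Node := if i.2 = 2 then (i.1 ++ [3], 0) else (i.1, i.2 + 1)

def bChild (i : Node) : Node := (i.1 ++ [i.2.castSucc], 0)

lemma lo_hi_aChild (i : Node) :
    lo (aChild i) = min (nodeMap i.1 lower) (nodeMap i.1 (innerA i.2)) ∧
      hi (aChild i) = max (nodeMap i.1 lower) (nodeMap i.1 (innerA i.2)) := by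
  obtain ⟨L, s⟩ := i
  fin_cases s
  · simp [aChild, lo, hi, top, innerA]; norm_num
  · simp [aChild, lo, hi, top, innerA]; norm_num
  · simp [aChild, lo, hi, top, innerA, nodeMap_append_singleton, inv_one_add_lower]
    norm_num [inv_four_add_upper, min_comm, max_comm]

lemma lo_hi_bChild (i : Node) :
    lo (bChild i) = min (nodeMap i.1 (innerB i.2)) (nodeMap i.1 (top i.2)) ∧
      hi (bChild i) = max (nodeMap i.1 (innerB i.2)) (nodeMap i.1 (top i.2)) := by
  simp [bChild, lo, hi, nodeMap_append_singleton, top, innerB, inv_one_add_lower, min_comm,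
    max_comm]

lemma nodeMap_strictMonoOn {L : List (Fin 4)} (he : Even L.length) :
    StrictMonoOn (nodeMap L) (Ici 0) :=
  cfMap_strictMonoOn (fun _ ha ↦ (mem_quotients ha).1) (by simpa [quotients] using he)

lemma nodeMap_strictAntiOn {L : List (Fin 4)} (ho : Odd L.length) :
    StrictAntiOn (nodeMap L) (Ici 0) :=
  cfMap_strictAntiOn (fun _ ha ↦ (mem_quotients ha).1) (by simpa [quotients] using ho)

lemma nodeMap_split_distortion (L : List (Fin 4)) (s : Fin 3) :
    4 * |nodeMap L (innerB s) - nodeMap L (innerA s)| ≤ |nodeMap L (top s) - nodeMap L lower| ∧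
    |nodeMap L (top s) - nodeMap L lower| ≤ 4 * |nodeMap L (innerA s) - nodeMap L lower| ∧
    |nodeMap L (top s) - nodeMap L lower| ≤ 4 * |nodeMap L (top s) - nodeMap L (innerB s)| := by
  obtain ⟨h₀, h₁, h₂, -, hgap, hA, hB⟩ := top_innerA_innerB_bounds s
  have hL : ∀ a ∈ quotients L, 0 < a := fun _ ha ↦ (mem_quotients ha).1
  have hm := lower_pos
  unfold nodeMap
  have gap := (cfMap_distortion hL (c := lower) (a := innerA s) (b := innerB s) (d := top s)
    hm.le h₀.le h₁.le h₂.le).2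
  have cA := (cfMap_distortion hL (c := lower) (a := lower) (b := innerA s) (d := top s)
    hm.le le_rfl h₀.le (h₁.trans h₂).le).1
  have cB := (cfMap_distortion hL (c := lower) (a := innerB s) (b := top s) (d := top s)
    hm.le (h₀.trans h₁).le h₂.le le_rfl).1
  refine ⟨le_of_mul_le_mul_left ?_ (by nlinarith : 0 < (top s - lower) * (1 + innerB s)),
    le_of_mul_le_mul_left ?_ (by nlinarith : 0 < (innerA s - lower) * (1 + lower)),
    le_of_mul_le_mul_left ?_ (by nlinarith : 0 < (top s - innerB s) * (1 + lower))⟩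
  all_goals set g := cfMap (quotients L)
  · nlinarith [mul_le_mul_of_nonneg_right hgap (abs_nonneg (g (top s) - g lower))]
  · nlinarith [mul_le_mul_of_nonneg_right hA
      (by positivity : 0 ≤ (1 + lower) * |g (innerA s) - g lower|)]
  · nlinarith [mul_le_mul_of_nonneg_right hB (abs_nonneg (g (top s) - g (innerB s)))]

/-- `nodeMap L` preserves orientation exactly when `L` has even length, so the child whose cell
contains `lo i` is `aChild i` for even and `bChild i` for odd length. -/
def child (i : Node) : Bool → Node :=
  if Even i.1.length then fun b ↦ cond b (bChild i) (aChild i)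
  else fun b ↦ cond b (aChild i) (bChild i)

lemma exists_split (i : Node) : ∃ Q₀ Q₁ Q₂ Q₃ : ℝ,
    lo i = Q₀ ∧ hi i = Q₃ ∧ lo (child i false) = Q₀ ∧ hi (child i false) = Q₁ ∧
      lo (child i true) = Q₂ ∧ hi (child i true) = Q₃ ∧ Q₀ < Q₁ ∧ Q₁ < Q₂ ∧ Q₂ < Q₃ ∧
      4 * (Q₂ - Q₁) ≤ Q₃ - Q₀ ∧ Q₃ - Q₀ ≤ 4 * (Q₁ - Q₀) ∧ Q₃ - Q₀ ≤ 4 * (Q₃ - Q₂) := by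
  obtain ⟨L, s⟩ := i
  obtain ⟨h₀, h₁, h₂, -⟩ := top_innerA_innerB_bounds s
  have hm : lower ∈ Ici (0 : ℝ) := lower_pos.le
  have hA : innerA s ∈ Ici (0 : ℝ) := (lower_pos.trans h₀).le
  have hB : innerB s ∈ Ici (0 : ℝ) := (lower_pos.trans (h₀.trans h₁)).le
  have hT : top s ∈ Ici (0 : ℝ) := (lower_pos.trans (h₀.trans (h₁.trans h₂))).le
  obtain ⟨dgap, dA, dB⟩ := nodeMap_split_distortion L s
  obtain ⟨haLo, haHi⟩ := lo_hi_aChild (L, s)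
  obtain ⟨hbLo, hbHi⟩ := lo_hi_bChild (L, s)
  simp only [lo, hi] at haLo haHi hbLo hbHi ⊢
  rcases Nat.even_or_odd L.length with he | ho
  · have f := nodeMap_strictMonoOn he
    have o₁ := f hm hA h₀
    have o₂ := f hA hB h₁
    have o₃ := f hB hT h₂
    simp only [child, he, if_true, cond_false, cond_true, haLo, haHi, hbLo, hbHi]
    refine ⟨_, _, _, _, min_eq_left (by linarith), max_eq_right (by linarith),
      min_eq_left o₁.le, max_eq_right o₁.le, min_eq_left o₃.le, max_eq_right o₃.le, o₁, o₂, o₃,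
      ?_, ?_, ?_⟩ <;>
    simp only [abs_of_pos (sub_pos.2 o₁), abs_of_pos (sub_pos.2 o₂), abs_of_pos (sub_pos.2 o₃),
      abs_of_pos (sub_pos.2 (o₁.trans (o₂.trans o₃)))] at dgap dA dB <;> linarith
  · have f := nodeMap_strictAntiOn ho
    have o₁ := f hm hA h₀
    have o₂ := f hA hB h₁
    have o₃ := f hB hT h₂
    simp only [child, Nat.not_even_iff_odd.2 ho, if_false, cond_false, cond_true, haLo, haHi, hbLo,
      hbHi]
    refine ⟨_, _, _, _, min_eq_right (by linarith), max_eq_left (by linarith),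
      min_eq_right o₃.le, max_eq_left o₃.le, min_eq_right o₁.le, max_eq_left o₁.le, o₃, o₂, o₁,
      ?_, ?_, ?_⟩ <;>
    simp only [abs_of_neg (sub_neg.2 o₁), abs_of_neg (sub_neg.2 o₂), abs_of_neg (sub_neg.2 o₃),
      abs_of_neg (sub_neg.2 (o₃.trans (o₂.trans o₁)))] at dgap dA dB <;> linarith

noncomputable def tree : QuarterGapTree Node where
  lo := lo
  hi := hi
  child := child
  lo_lt_hi i := by
    obtain ⟨_, _, _, _, h₀, h₃, -, -, -, -, h₀₁, h₁₂, h₂₃, -⟩ := exists_split i; linarith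
  lo_child_false i := by obtain ⟨_, _, _, _, h₀, -, h, -⟩ := exists_split i; rw [h, h₀]
  hi_child_true i := by obtain ⟨_, _, _, _, -, h₃, -, -, -, h, -⟩ := exists_split i; rw [h, h₃]
  hi_child_false_le i := by
    obtain ⟨_, _, _, _, -, -, -, h₁, h₂, -, -, h, -⟩ := exists_split i; rw [h₁, h₂]; exact h.le
  gap_le i := by
    obtain ⟨_, _, _, _, h₀, h₃, -, h₁, h₂, -, -, -, -, h, -⟩ := exists_split i
    rw [h₀, h₃, h₁, h₂]; linarith
  le_len_child i b := by
    obtain ⟨_, _, _, _, h₀, h₃, h₀', h₁, h₂, h₃', -, -, -, -, hA, hB⟩ := exists_split i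
    cases b
    · rw [h₀, h₃, h₀', h₁]; linarith
    · rw [h₀, h₃, h₂, h₃']; linarith

def rank (i : Node) : ℕ := 3 * i.1.length + i.2

lemma rank_lt_rank_child (i : Node) (b : Bool) : rank i < rank (child i b) := by
  obtain ⟨L, s⟩ := i
  have ha : rank (L, s) < rank (aChild (L, s)) := by
    fin_cases s <;> simp [aChild, rank]
    omega
  have hb : rank (L, s) < rank (bChild (L, s)) := by
    simp [bChild, rank]; omega
  unfold child
  split_ifs <;> cases b <;> assumption

lemma rank_node (i : Node) (w : List Bool) : rank i + w.length ≤ rank (tree.node i w) := by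
  induction w generalizing i with
  | nil => rfl
  | cons b w ih =>
    have := rank_lt_rank_child i b
    exact le_trans (by simp only [List.length_cons]; omega) (ih (child i b))

lemma exists_nodeMap_eq_of_mem_cell {i : Node} {x : ℝ} (hx : x ∈ tree.cell i) :
    ∃ t ∈ Ioo (0 : ℝ) 1, nodeMap i.1 t = x := by
  obtain ⟨h₀, h₁, h₂, h₃, -⟩ := top_innerA_innerB_bounds i.2
  have hsub : uIcc lower (top i.2) ⊆ Ioo 0 1 := by
    rw [uIcc_of_le (by linarith)]
    exact Icc_subset_Ioo lower_pos h₃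
  have hcont : ContinuousOn (nodeMap i.1) (uIcc lower (top i.2)) :=
    (continuousOn_cfMap fun _ ha ↦ (mem_quotients ha).1).mono
      (hsub.trans Ioo_subset_Ioi_self |>.trans Ioi_subset_Ici_self)
  obtain ⟨t, ht, rfl⟩ := intermediate_value_uIcc hcont hx
  exact ⟨t, hsub ht, rfl⟩

lemma limitSet_subset_cantorSetCF (i : Node) : tree.limitSet i ⊆ cantorSetCF 4 := by
  intro x hx
  refine mem_cantorSetCF_of_forall_exists_cfMap fun n ↦ ?_
  obtain ⟨w, hw, hxw⟩ := mem_iUnion₂.1 (mem_iInter.1 hx (3 * n + 2))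
  obtain ⟨t, ht, hxt⟩ := exists_nodeMap_eq_of_mem_cell hxw
  have hrank := rank_node i w
  have hs := (tree.node i w).2.isLt
  refine ⟨quotients (tree.node i w).1, ?_, fun _ ha ↦ mem_quotients ha, t, ht, hxt⟩
  simp only [mem_ofPred_eq] at hw
  simp only [rank, quotients, List.length_map] at hrank ⊢
  omega

lemma lo_hi_root : lo ([], 0) = lower ∧ hi ([], 0) = upper := by
  have : lower < upper := by unfold lower upper; linarith [sqrt_two_bounds.1]
  simp [lo, hi, nodeMap, quotients, top, inv_one_add_lower, this.le]

end Hall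

/-- **Hall (1947)**: the Minkowski sum `C(4) + C(4)` equals the interval `[√2 - 1, 4(√2 - 1)]`. -/
theorem hall_sum_C4 :
    {s : ℝ | ∃ x ∈ cantorSetCF 4, ∃ y ∈ cantorSetCF 4, s = x + y} =
      Set.Icc (Real.sqrt 2 - 1) (4 * (Real.sqrt 2 - 1)) := by
  rw [show Icc (√2 - 1) (4 * (√2 - 1)) = Icc (Hall.lower + Hall.lower) (Hall.upper + Hall.upper) by
    unfold Hall.lower Hall.upper; ring_nf]
  ext s
  constructor
  · rintro ⟨x, hx, y, hy, rfl⟩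
    obtain ⟨hx₁, hx₂⟩ := Hall.cantorSetCF_four_subset hx
    obtain ⟨hy₁, hy₂⟩ := Hall.cantorSetCF_four_subset hy
    exact ⟨add_le_add hx₁ hy₁, add_le_add hx₂ hy₂⟩
  · intro hs
    have hlen := Hall.tree.len_pos ([], 0)
    obtain ⟨x, hx, y, hy, hxy⟩ := Hall.tree.Icc_subset_limitSet_add (by linarith) (by linarith)
      (by simpa [Hall.tree, Hall.lo_hi_root] using hs)
    exact ⟨x, Hall.limitSet_subset_cantorSetCF _ hx, y, Hall.limitSet_subset_cantorSetCF _ hy,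
      hxy.symm⟩
end
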